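/- Under the FISTA setup, the iterate sequence (x_k) is bounded. Moreover, if F(x_k) → μ := min F, then every weak cluster point of (x_k) lies in S := argmin F. -/

import Mathlib

/-!
The proximal-gradient step satisfies `F (T y) + β/2 ‖u - T y‖² ≤ F u + β/2 ‖u - y‖²` for every `u`:
this combines the descent lemma and the gradient inequality for `f` with the quadratic growth of
the `β`-strongly convex function `g + β/2 ‖· - (y - β⁻¹ ∇f y)‖²` away from its minimiser `T y`.
Taking `u = (1 - 1/t) x + (1/t) s` along the iteration makes the energy
`t_k² (F x_{k+1} - μ) + β/2 ‖s - z_{k+1}‖²` nonincreasing, so every `z_k` lies in the closed ball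
of radius `‖x_0 - s‖` about `s`; since `x_{k+1}` is a convex combination of `x_k` and `z_{k+1}`,
so does every `x_k`. For the cluster points: the sublevel sets of `F` are convex and closed, hence
weakly closed by Hahn–Banach, so `F` is weakly sequentially lower semicontinuous.
-/

open Filter
open scoped RealInnerProductSpace

/-- `w` is a weak cluster point of the sequence `x`. -/
def IsWeakClusterPoint {X : Type*} [NormedAddCommGroup X] [InnerProductSpace ℝ X]
    (x : ℕ → X) (w : X) : Prop :=
  ∃ φ : ℕ → ℕ, StrictMono φ ∧
    ∀ u : X, Tendsto (fun k => ⟪x (φ k), u⟫) atTop (nhds ⟪w, u⟫)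

open Set Metric Topology AffineMap
open scoped NNReal

section Smooth

variable {X : Type*} [NormedAddCommGroup X] [InnerProductSpace ℝ X] [CompleteSpace X]

theorem HasGradientAt.hasDerivAt_comp_lineMap {f : X → ℝ} {g u w : X} {s : ℝ}
    (h : HasGradientAt f g (lineMap u w s)) : HasDerivAt (f ∘ lineMap u w) ⟪g, w - u⟫ s :=
  h.hasFDerivAt.comp_hasDerivAt s hasDerivAt_lineMap

theorem ConvexOn.add_inner_le_of_hasGradientAt {s : Set X} {f : X → ℝ} {g u w : X}
    (hf : ConvexOn ℝ s f) (hu : u ∈ s) (hw : w ∈ s) (hg : HasGradientAt f g u) :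
    f u + ⟪g, w - u⟫ ≤ f w := by
  have hφ : ConvexOn ℝ (lineMap u w ⁻¹' s) (f ∘ lineMap (k := ℝ) u w) := hf.comp_affineMap _
  have hd : HasDerivAt (f ∘ lineMap u w) ⟪g, w - u⟫ (0 : ℝ) :=
    HasGradientAt.hasDerivAt_comp_lineMap (by simpa using hg)
  have hslope :=
    hφ.deriv_le_slope (by simpa using hu) (by simpa using hw) zero_lt_one hd.differentiableAt
  rw [hd.deriv, slope_def_field] at hslope
  simp only [Function.comp_apply, lineMap_apply_one, lineMap_apply_zero, sub_zero, div_one]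
    at hslope
  linarith

theorem apply_le_add_inner_add_sq_of_lipschitzWith_gradient {f : X → ℝ} {f' : X → X} {K : ℝ≥0}
    (hf : ∀ x, HasGradientAt f (f' x) x) (hK : LipschitzWith K f') (u w : X) :
    f w ≤ f u + ⟪f' u, w - u⟫ + K / 2 * ‖w - u‖ ^ 2 := by
  set ψ : ℝ → ℝ := fun s ↦ f (lineMap u w s) - s * ⟪f' u, w - u⟫ - K / 2 * s ^ 2 * ‖w - u‖ ^ 2
  have hψ (s : ℝ) :
      HasDerivAt ψ (⟪f' (lineMap u w s) - f' u, w - u⟫ - K * s * ‖w - u‖ ^ 2) s := by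
    have := (((hf (lineMap u w s)).hasDerivAt_comp_lineMap).sub
      ((hasDerivAt_id s).mul_const ⟪f' u, w - u⟫)).sub
      (((hasDerivAt_pow 2 s).const_mul (K / 2 : ℝ)).mul_const (‖w - u‖ ^ 2))
    refine this.congr_deriv ?_
    rw [inner_sub_left]
    ring
  have hψ_nonpos (s : ℝ) (hs : 0 ≤ s) :
      ⟪f' (lineMap u w s) - f' u, w - u⟫ - K * s * ‖w - u‖ ^ 2 ≤ 0 := by
    have hlip : ‖f' (lineMap u w s) - f' u‖ ≤ K * (s * ‖w - u‖) := by
      simpa [← dist_eq_norm, dist_lineMap_left, abs_of_nonneg hs, dist_comm u w]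
        using hK.dist_le_mul (lineMap u w s) u
    have hinner :=
      (real_inner_le_norm _ _).trans (mul_le_mul_of_nonneg_right hlip (norm_nonneg (w - u)))
    linarith
  have hanti : AntitoneOn ψ (Ici 0) :=
    antitoneOn_of_hasDerivWithinAt_nonpos (convex_Ici 0)
      (fun s _ ↦ (hψ s).continuousAt.continuousWithinAt) (fun s _ ↦ (hψ s).hasDerivWithinAt)
      (fun s hs ↦ hψ_nonpos s (interior_subset hs))
  have hψ01 := hanti self_mem_Ici (mem_Ici.2 zero_le_one) zero_le_one
  simp only [ψ, lineMap_apply_zero, lineMap_apply_one] at hψ01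
  linarith

end Smooth

section StrongConvexity

variable {X : Type*} [NormedAddCommGroup X]

theorem strongConvexOn_sq_norm_sub [InnerProductSpace ℝ X] {s : Set X} (hs : Convex ℝ s) (m : ℝ)
    (p : X) : StrongConvexOn s m fun v ↦ m / 2 * ‖v - p‖ ^ 2 := by
  refine ⟨hs, fun x _ y _ a b ha hb hab ↦ le_of_eq ?_⟩
  obtain rfl := eq_sub_of_add_eq hab
  beta_reduce
  rw [show (1 - b) • x + b • y - p = (1 - b) • (x - p) + b • (y - p) by module,
    show x - y = (x - p) - (y - p) by abel, norm_add_sq_real, norm_sub_sq_real (x - p) (y - p),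
    norm_smul, norm_smul, real_inner_smul_left, real_inner_smul_right, Real.norm_of_nonneg ha,
    Real.norm_of_nonneg hb, smul_eq_mul, smul_eq_mul]
  ring

theorem StrongConvexOn.add_sq_norm_sub_le_of_isMinOn [NormedSpace ℝ X] {s : Set X} {m : ℝ}
    {h : X → ℝ} {q u : X} (hh : StrongConvexOn s m h) (hq : q ∈ s) (hmin : IsMinOn h s q)
    (hu : u ∈ s) : h q + m / 2 * ‖u - q‖ ^ 2 ≤ h u := by
  have hsegment : ∀ l ∈ Ioo (0 : ℝ) 1, h q + (1 - l) * (m / 2 * ‖u - q‖ ^ 2) ≤ h u := by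
    rintro l ⟨hl0, hl1⟩
    have hmin_l := hmin (hh.1 hu hq hl0.le (sub_nonneg.2 hl1.le) (add_sub_cancel l 1))
    have hconv_l := hh.2 hu hq hl0.le (sub_nonneg.2 hl1.le) (add_sub_cancel l 1)
    simp only [mem_ofPred_eq, smul_eq_mul] at hmin_l hconv_l
    refine le_of_mul_le_mul_left ?_ hl0
    linarith
  have hlim : Tendsto (fun l : ℝ ↦ h q + (1 - l) * (m / 2 * ‖u - q‖ ^ 2)) (𝓝[>] 0)
      (𝓝 (h q + m / 2 * ‖u - q‖ ^ 2)) := by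
    have : Continuous fun l : ℝ ↦ h q + (1 - l) * (m / 2 * ‖u - q‖ ^ 2) := by fun_prop
    simpa using (this.tendsto 0).mono_left nhdsWithin_le_nhds
  exact le_of_tendsto hlim (eventually_of_mem (Ioo_mem_nhdsGT one_pos) hsegment)

end StrongConvexity

theorem proxGrad_fundamental_inequality {X : Type*} [NormedAddCommGroup X]
    [InnerProductSpace ℝ X] [CompleteSpace X] {D : Set X} {f G : X → ℝ} {f' : X → X} {β : ℝ}
    (hβ : 0 < β) (hf : ConvexOn ℝ univ f) (hf' : ∀ x, HasGradientAt f (f' x) x)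
    (hlip : LipschitzWith β.toNNReal f') (hG : ConvexOn ℝ D G) {y q u : X} (hq : q ∈ D)
    (hmin : IsMinOn (fun v ↦ G v + β / 2 * ‖v - (y - β⁻¹ • f' y)‖ ^ 2) D q) (hu : u ∈ D) :
    f q + G q + β / 2 * ‖u - q‖ ^ 2 ≤ f u + G u + β / 2 * ‖u - y‖ ^ 2 := by
  have hstrong : StrongConvexOn D β fun v ↦ G v + β / 2 * ‖v - (y - β⁻¹ • f' y)‖ ^ 2 := by
    have := hG.uniformConvexOn_zero.add (strongConvexOn_sq_norm_sub hG.1 β (y - β⁻¹ • f' y))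
    rwa [zero_add] at this
  have hexpand (v : X) : β / 2 * ‖v - (y - β⁻¹ • f' y)‖ ^ 2
      = β / 2 * ‖v - y‖ ^ 2 + ⟪f' y, v - y⟫ + β⁻¹ / 2 * ‖f' y‖ ^ 2 := by
    rw [show v - (y - β⁻¹ • f' y) = (v - y) + β⁻¹ • f' y by abel, norm_add_sq_real,
      real_inner_smul_right, norm_smul, Real.norm_of_nonneg (inv_nonneg.2 hβ.le), real_inner_comm]
    field_simp
  have hthree := hstrong.add_sq_norm_sub_le_of_isMinOn hq hmin hu
  have hdescent := apply_le_add_inner_add_sq_of_lipschitzWith_gradient hf' hlip y q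
  have hgrad := hf.add_inner_le_of_hasGradientAt (mem_univ y) (mem_univ u) (hf' y)
  rw [Real.coe_toNNReal β hβ.le] at hdescent
  rw [hexpand, hexpand] at hthree
  linarith

theorem convexOn_toReal_of_ereal_convex {X : Type*} [AddCommGroup X] [Module ℝ X]
    {g : X → EReal}
    (hg : ∀ x y : X, ∀ a b : ℝ, 0 ≤ a → 0 ≤ b → a + b = 1 →
      g (a • x + b • y) ≤ (a : EReal) * g x + (b : EReal) * g y)
    (hg_ne_bot : ∀ x, g x ≠ ⊥) : ConvexOn ℝ {x | g x ≠ ⊤} fun x ↦ (g x).toReal := by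
  have hcomb {x y : X} (hx : g x ≠ ⊤) (hy : g y ≠ ⊤) {a b : ℝ} (ha : 0 ≤ a) (hb : 0 ≤ b)
      (hab : a + b = 1) :
      g (a • x + b • y) ≤ ((a * (g x).toReal + b * (g y).toReal : ℝ) : EReal) := by
    rw [EReal.coe_add, EReal.coe_mul, EReal.coe_mul, EReal.coe_toReal hx (hg_ne_bot x),
      EReal.coe_toReal hy (hg_ne_bot y)]
    exact hg x y a b ha hb hab
  refine ⟨fun x hx y hy a b ha hb hab ↦ ((hcomb hx hy ha hb hab).trans_lt (EReal.coe_lt_top _)).ne,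
    fun x hx y hy a b ha hb hab ↦ ?_⟩
  exact (EReal.toReal_le_toReal (hcomb hx hy ha hb hab) (hg_ne_bot _)
    (EReal.coe_ne_top _)).trans_eq (EReal.toReal_coe _)

theorem isMinOn_toReal_add_of_forall_le {α : Type*} {g : α → EReal} {h : α → ℝ} {q : α}
    (hg_ne_bot : ∀ x, g x ≠ ⊥) (hproper : ∃ x, g x ≠ ⊤) (hq : ∀ u, g q + h q ≤ g u + h u) :
    g q ≠ ⊤ ∧ IsMinOn (fun v ↦ (g v).toReal + h v) {v | g v ≠ ⊤} q := by
  obtain ⟨u₀, hu₀⟩ := hproper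
  have hq_ne_top : g q ≠ ⊤ := by
    intro htop
    have := hq u₀
    rw [htop, EReal.top_add_of_ne_bot (EReal.coe_ne_bot _), top_le_iff] at this
    exact (EReal.add_lt_top hu₀ (EReal.coe_ne_top _)).ne this
  refine ⟨hq_ne_top, isMinOn_iff.2 fun u hu ↦ ?_⟩
  have := hq u
  rwa [← EReal.coe_toReal hq_ne_top (hg_ne_bot q), ← EReal.coe_toReal hu (hg_ne_bot u),
    ← EReal.coe_add, ← EReal.coe_add, EReal.coe_le_coe_iff] at this

theorem lowerSemicontinuous_coe_add {X : Type*} [TopologicalSpace X] {f : X → ℝ} {g : X → EReal}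
    (hf : Continuous f) (hg : LowerSemicontinuous g) :
    LowerSemicontinuous fun x ↦ (f x : EReal) + g x :=
  (continuous_coe_real_ereal.comp hf).lowerSemicontinuous.add' hg fun _ ↦
    EReal.continuousAt_add (Or.inl (EReal.coe_ne_top _)) (Or.inl (EReal.coe_ne_bot _))

theorem quasiconvexOn_coe_add {X : Type*} [AddCommGroup X] [Module ℝ X] {f : X → ℝ}
    {g : X → EReal} (hf : ConvexOn ℝ univ f) (hg : ConvexOn ℝ {x | g x ≠ ⊤} fun x ↦ (g x).toReal)
    (hg_ne_bot : ∀ x, g x ≠ ⊥) : QuasiconvexOn ℝ univ fun x ↦ (f x : EReal) + g x := by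
  intro r
  induction r using EReal.rec with
  | bot =>
    convert convex_empty (𝕜 := ℝ) (E := X)
    ext x
    simp [EReal.add_eq_bot_iff, hg_ne_bot]
  | top => simpa using convex_univ
  | coe r =>
    convert ((hf.subset (subset_univ _) hg.1).add hg).convex_le r using 1
    ext x
    by_cases hx : g x = ⊤
    · simp [hx]
    · obtain ⟨c, hc⟩ : ∃ c : ℝ, g x = c := ⟨_, (EReal.coe_toReal hx (hg_ne_bot x)).symm⟩
      simp [hc, ← EReal.coe_add]

section WeakTopology

variable {X : Type*} [NormedAddCommGroup X] [InnerProductSpace ℝ X] [CompleteSpace X]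

theorem Convex.mem_of_tendsto_inner {ι : Type*} {l : Filter ι} [l.NeBot] {C : Set X}
    (hconv : Convex ℝ C) (hclosed : IsClosed C) {x : ι → X} {w : X}
    (hx : ∀ u, Tendsto (fun i ↦ ⟪x i, u⟫) l (𝓝 ⟪w, u⟫)) (hmem : ∀ᶠ i in l, x i ∈ C) : w ∈ C := by
  by_contra hw
  obtain ⟨ℓ, r, hℓw, hℓC⟩ := geometric_hahn_banach_point_closed hconv hclosed hw
  set v := (InnerProductSpace.toDual ℝ X).symm ℓ
  have hℓ (p : X) : ℓ p = ⟪p, v⟫ := by rw [real_inner_comm, InnerProductSpace.toDual_symm_apply]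
  have : r ≤ ⟪w, v⟫ := ge_of_tendsto (hx v) (hmem.mono fun i hi ↦ hℓ (x i) ▸ (hℓC _ hi).le)
  linarith [hℓ w]

theorem IsWeakClusterPoint.apply_le_of_tendsto {γ : Type*} [LinearOrder γ] [TopologicalSpace γ]
    [OrderTopology γ] [DenselyOrdered γ] {Φ : X → γ} {x : ℕ → X} {w : X} {a : γ}
    (hw : IsWeakClusterPoint x w) (hΦ : QuasiconvexOn ℝ univ Φ) (hlsc : LowerSemicontinuous Φ)
    (hlim : Tendsto (fun k ↦ Φ (x k)) atTop (𝓝 a)) : Φ w ≤ a := by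
  obtain ⟨φ, hφ, hweak⟩ := hw
  refine le_of_forall_gt_imp_ge_of_dense fun r hr ↦ ?_
  have hconv : Convex ℝ {p | Φ p ≤ r} := by simpa using hΦ r
  exact hconv.mem_of_tendsto_inner (hlsc.isClosed_preimage r) hweak
    (((hlim.comp hφ.tendsto_atTop).eventually_lt_const hr).mono fun _ ↦ le_of_lt)

end WeakTopology

section FISTA

variable {X : Type*} [NormedAddCommGroup X] [InnerProductSpace ℝ X]

structure IsFistaParameter (t : ℕ → ℝ) : Prop where
  zero : t 0 = 1
  one_le : ∀ k, 1 ≤ t k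
  sq_sub_le : ∀ k, t (k + 1) ^ 2 - t (k + 1) ≤ t k ^ 2

structure IsFistaSequence (T : X → X) (t : ℕ → ℝ) (x y : ℕ → X) : Prop where
  y_zero : y 0 = x 0
  x_succ : ∀ k, x (k + 1) = T (y k)
  y_succ : ∀ k, y (k + 1) = x (k + 1) + ((t k - 1) / t (k + 1)) • (x (k + 1) - x k)

theorem Convex.mem_of_extrapolation_mem {S : Set X} (hS : Convex ℝ S) {a b : X} {t : ℝ}
    (ht : 1 ≤ t) (ha : a ∈ S) (hab : (1 - t) • a + t • b ∈ S) : b ∈ S := by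
  have ht0 : t ≠ 0 := by positivity
  convert hS hab ha (by positivity) (sub_nonneg.2 (inv_le_one_of_one_le₀ ht)) (add_sub_cancel _ _)
    using 1
  have : t⁻¹ * (1 - t) = t⁻¹ - 1 := by field_simp
  rw [smul_add, smul_smul, smul_smul, this, inv_mul_cancel₀ ht0, one_smul]
  module

theorem IsFistaSequence.extrapolation_succ {T : X → X} {t : ℕ → ℝ} {x y : ℕ → X}
    (hseq : IsFistaSequence T t x y) (ht : IsFistaParameter t) (k : ℕ) :
    (1 - t (k + 1)) • x (k + 1) + t (k + 1) • y (k + 1) = (1 - t k) • x k + t k • x (k + 1) := by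
  have ht0 : t (k + 1) ≠ 0 := (zero_lt_one.trans_le (ht.one_le _)).ne'
  rw [hseq.y_succ, smul_add, smul_smul, mul_div_cancel₀ _ ht0]
  module

variable {D : Set X} {φ : X → ℝ} {T : X → X} {β : ℝ} {s : X}

theorem fista_step_le (hφ : ConvexOn ℝ D φ)
    (hkey : ∀ y, ∀ u ∈ D, φ (T y) + β / 2 * ‖u - T y‖ ^ 2 ≤ φ u + β / 2 * ‖u - y‖ ^ 2)
    (hs : s ∈ D) {t : ℝ} (ht : 1 ≤ t) {xp : X} (hxp : xp ∈ D) (y : X) :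
    t ^ 2 * (φ (T y) - φ s) + β / 2 * ‖s - ((1 - t) • xp + t • T y)‖ ^ 2
      ≤ (t ^ 2 - t) * (φ xp - φ s) + β / 2 * ‖s - ((1 - t) • xp + t • y)‖ ^ 2 := by
  have ht0 : 0 < t := by linarith
  have hinv : 0 ≤ 1 - t⁻¹ := sub_nonneg.2 (inv_le_one_of_one_le₀ ht)
  set u := (1 - t⁻¹) • xp + t⁻¹ • s
  have hu : u ∈ D := hφ.1 hxp hs hinv (inv_nonneg.2 ht0.le) (sub_add_cancel _ _)
  have hφu : φ u ≤ (1 - t⁻¹) * φ xp + t⁻¹ * φ s :=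
    hφ.2 hxp hs hinv (inv_nonneg.2 ht0.le) (sub_add_cancel _ _)
  have hdist (v : X) : ‖u - v‖ ^ 2 = t⁻¹ ^ 2 * ‖s - ((1 - t) • xp + t • v)‖ ^ 2 := by
    have : u - v = t⁻¹ • (s - ((1 - t) • xp + t • v)) := by
      have : t⁻¹ * (1 - t) = t⁻¹ - 1 := by field_simp
      rw [smul_sub, smul_add, smul_smul, smul_smul, this, inv_mul_cancel₀ ht0.ne', one_smul]
      module
    rw [this, norm_smul, mul_pow, Real.norm_of_nonneg (inv_nonneg.2 ht0.le)]
  have hkey_u := hkey y u hu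
  rw [hdist, hdist] at hkey_u
  have hscaled := mul_le_mul_of_nonneg_left (hkey_u.trans (add_le_add_left hφu _)) (sq_nonneg t)
  have e1 : t ^ 2 * t⁻¹ ^ 2 = 1 := by field_simp
  have e2 : t ^ 2 * t⁻¹ = t := by field_simp
  linear_combination hscaled - (φ xp - φ s) * e2 + β / 2 *
    (‖s - ((1 - t) • xp + t • y)‖ ^ 2 - ‖s - ((1 - t) • xp + t • T y)‖ ^ 2) * e1

theorem fista_energy_le (hφ : ConvexOn ℝ D φ)
    (hkey : ∀ y, ∀ u ∈ D, φ (T y) + β / 2 * ‖u - T y‖ ^ 2 ≤ φ u + β / 2 * ‖u - y‖ ^ 2)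
    (hTD : ∀ y, T y ∈ D) (hs : s ∈ D) (hmin : IsMinOn φ D s) {t : ℕ → ℝ}
    (ht : IsFistaParameter t) {x y : ℕ → X} (hseq : IsFistaSequence T t x y) (k : ℕ) :
    t k ^ 2 * (φ (x (k + 1)) - φ s) + β / 2 * ‖s - ((1 - t k) • x k + t k • x (k + 1))‖ ^ 2
      ≤ β / 2 * ‖s - x 0‖ ^ 2 := by
  induction k with
  | zero =>
    have h := hkey (y 0) s hs
    rw [← hseq.x_succ, hseq.y_zero] at h
    simp only [ht.zero, sub_self, zero_smul, zero_add, one_smul, one_pow, one_mul]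
    linarith
  | succ k ih =>
    have hxD : x (k + 1) ∈ D := hseq.x_succ k ▸ hTD (y k)
    have hstep := fista_step_le hφ hkey hs (ht.one_le (k + 1)) hxD (y (k + 1))
    rw [← hseq.x_succ, hseq.extrapolation_succ ht] at hstep
    have hgap := mul_le_mul_of_nonneg_right (ht.sq_sub_le k) (sub_nonneg.2 (hmin hxD))
    linarith

theorem fista_dist_le (hβ : 0 < β) (hφ : ConvexOn ℝ D φ)
    (hkey : ∀ y, ∀ u ∈ D, φ (T y) + β / 2 * ‖u - T y‖ ^ 2 ≤ φ u + β / 2 * ‖u - y‖ ^ 2)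
    (hTD : ∀ y, T y ∈ D) (hs : s ∈ D) (hmin : IsMinOn φ D s) {t : ℕ → ℝ}
    (ht : IsFistaParameter t) {x y : ℕ → X} (hseq : IsFistaSequence T t x y) (k : ℕ) :
    ‖x k - s‖ ≤ ‖x 0 - s‖ := by
  have hz (k : ℕ) : (1 - t k) • x k + t k • x (k + 1) ∈ closedBall s ‖x 0 - s‖ := by
    have hE := fista_energy_le hφ hkey hTD hs hmin ht hseq k
    have hgap : 0 ≤ t k ^ 2 * (φ (x (k + 1)) - φ s) :=
      mul_nonneg (sq_nonneg _) (sub_nonneg.2 (hmin (hseq.x_succ k ▸ hTD (y k))))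
    rw [mem_closedBall_iff_norm', norm_sub_rev (x 0)]
    exact (pow_le_pow_iff_left₀ (norm_nonneg _) (norm_nonneg _) two_ne_zero).1 (by nlinarith)
  suffices x k ∈ closedBall s ‖x 0 - s‖ from mem_closedBall_iff_norm.1 this
  induction k with
  | zero => exact mem_closedBall_iff_norm.2 le_rfl
  | succ k ih => exact (convex_closedBall s _).mem_of_extrapolation_mem (ht.one_le k) ih (hz k)

end FISTA

theorem fista_iterates_bounded_and_clusters_in_argmin_general
    {X : Type*} [NormedAddCommGroup X] [InnerProductSpace ℝ X] [CompleteSpace X]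
    (β : ℝ) (hβ : 0 < β)
    (f : X → ℝ) (hf : ConvexOn ℝ Set.univ f)
    (f' : X → X) (hf' : ∀ x, HasGradientAt f (f' x) x)
    (hlip : LipschitzWith (Real.toNNReal β) f')
    (g : X → EReal)
    (hgconv : ∀ x y : X, ∀ a b : ℝ, 0 ≤ a → 0 ≤ b → a + b = 1 →
      g (a • x + b • y) ≤ (a : EReal) * g x + (b : EReal) * g y)
    (hglsc : LowerSemicontinuous g)
    (hg_ne_bot : ∀ x, g x ≠ ⊥) (hg_proper : ∃ x, g x ≠ ⊤)
    (T : X → X)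
    (hT : ∀ y u : X,
      g (T y) + (((β / 2) * ‖T y - (y - β⁻¹ • f' y)‖ ^ 2 : ℝ) : EReal)
        ≤ g u + (((β / 2) * ‖u - (y - β⁻¹ • f' y)‖ ^ 2 : ℝ) : EReal))
    (F : X → EReal) (hF : ∀ x, F x = (f x : EReal) + g x)
    (t : ℕ → ℝ) (ht0 : t 0 = 1)
    (htlow : ∀ k : ℕ, ((k : ℝ) + 2) / 2 ≤ t k)
    (htrec : ∀ k : ℕ, (t (k + 1)) ^ 2 - t (k + 1) ≤ (t k) ^ 2)
    (x y : ℕ → X) (hy0 : y 0 = x 0)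
    (hx : ∀ k : ℕ, x (k + 1) = T (y k))
    (hy : ∀ k : ℕ, y (k + 1) = x (k + 1) + ((t k - 1) / t (k + 1)) • (x (k + 1) - x k))
    -- the minimizer set is nonempty, with minimal value μ
    (s : X) (hs : ∀ v : X, F s ≤ F v)
    (μ : ℝ) (hμ : (μ : EReal) = F s) :
    (∃ M : ℝ, ∀ k : ℕ, ‖x k‖ ≤ M) ∧
    (Tendsto (fun k : ℕ => F (x k)) atTop (nhds (μ : EReal)) →
      ∀ w : X, IsWeakClusterPoint x w → ∀ v : X, F w ≤ F v) := by
  obtain rfl : F = fun x ↦ (f x : EReal) + g x := funext hF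
  have hG := convexOn_toReal_of_ereal_convex hgconv hg_ne_bot
  have hprox (y : X) := isMinOn_toReal_add_of_forall_le hg_ne_bot hg_proper
    (h := fun v ↦ β / 2 * ‖v - (y - β⁻¹ • f' y)‖ ^ 2) (hT y)
  obtain ⟨hsD, hsmin⟩ := isMinOn_toReal_add_of_forall_le hg_ne_bot hg_proper fun v ↦
    (add_comm _ _).trans_le ((hs v).trans_eq (add_comm _ _))
  have hφmin : IsMinOn (f + fun x ↦ (g x).toReal) {x | g x ≠ ⊤} s :=
    isMinOn_iff.2 fun v hv ↦ (add_comm _ _).trans_le ((hsmin hv).trans_eq (add_comm _ _))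
  have hkey (y : X) (u : X) (hu : g u ≠ ⊤) :=
    proxGrad_fundamental_inequality hβ hf hf' hlip hG (hprox y).1 (hprox y).2 hu
  have ht : IsFistaParameter t :=
    ⟨ht0, fun k ↦ by linarith [htlow k, k.cast_nonneg (α := ℝ)], htrec⟩
  have hdist := fista_dist_le hβ ((hf.subset (subset_univ _) hG.1).add hG) hkey
    (fun y ↦ (hprox y).1) hsD hφmin ht ⟨hy0, hx, hy⟩
  refine ⟨⟨‖s‖ + ‖x 0 - s‖, fun k ↦ ?_⟩, fun hlim w hw v ↦ ?_⟩
  · calc ‖x k‖ = ‖(x k - s) + s‖ := by rw [sub_add_cancel]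
      _ ≤ ‖x k - s‖ + ‖s‖ := norm_add_le _ _
      _ ≤ ‖s‖ + ‖x 0 - s‖ := by linarith [hdist k]
  · have hf_cont : Continuous f := continuous_iff_continuousAt.2 fun x ↦ (hf' x).continuousAt
    calc (f w : EReal) + g w ≤ μ := hw.apply_le_of_tendsto (quasiconvexOn_coe_add hf hG hg_ne_bot)
          (lowerSemicontinuous_coe_add hf_cont hglsc) hlim
      _ = _ := hμ
      _ ≤ _ := hs v

theorem fista_iterates_bounded_and_clusters_in_argmin
    {X : Type*} [NormedAddCommGroup X] [InnerProductSpace ℝ X] [CompleteSpace X]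
    (β : ℝ) (hβ : 0 < β)
    (f : X → ℝ) (hf : ConvexOn ℝ Set.univ f)
    (f' : X → X) (hf' : ∀ x, HasGradientAt f (f' x) x)
    (hlip : LipschitzWith (Real.toNNReal β) f')
    (g : X → EReal)
    (hgconv : ∀ x y : X, ∀ a b : ℝ, 0 ≤ a → 0 ≤ b → a + b = 1 →
      g (a • x + b • y) ≤ (a : EReal) * g x + (b : EReal) * g y)
    (hglsc : LowerSemicontinuous g)
    (hg_ne_bot : ∀ x, g x ≠ ⊥) (hg_proper : ∃ x, g x ≠ ⊤)
    (T : X → X)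
    (hT : ∀ y u : X,
      g (T y) + (((β / 2) * ‖T y - (y - β⁻¹ • f' y)‖ ^ 2 : ℝ) : EReal)
        ≤ g u + (((β / 2) * ‖u - (y - β⁻¹ • f' y)‖ ^ 2 : ℝ) : EReal))
    (F : X → EReal) (hF : ∀ x, F x = (f x : EReal) + g x)
    (t : ℕ → ℝ) (htpos : ∀ k, 0 < t k) (ht0 : t 0 = 1)
    (htlow : ∀ k : ℕ, ((k : ℝ) + 2) / 2 ≤ t k)
    (htrec : ∀ k : ℕ, (t (k + 1)) ^ 2 - t (k + 1) ≤ (t k) ^ 2)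
    (x y : ℕ → X) (hy0 : y 0 = x 0)
    (hx : ∀ k : ℕ, x (k + 1) = T (y k))
    (hy : ∀ k : ℕ, y (k + 1) = x (k + 1) + ((t k - 1) / t (k + 1)) • (x (k + 1) - x k))
    -- the minimizer set is nonempty, with minimal value μ
    (s : X) (hs : ∀ v : X, F s ≤ F v)
    (μ : ℝ) (hμ : (μ : EReal) = F s) :
    (∃ M : ℝ, ∀ k : ℕ, ‖x k‖ ≤ M) ∧
    (Tendsto (fun k : ℕ => F (x k)) atTop (nhds (μ : EReal)) →
      ∀ w : X, IsWeakClusterPoint x w → ∀ v : X, F w ≤ F v) :=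
  fista_iterates_bounded_and_clusters_in_argmin_general β hβ f hf f' hf' hlip g hgconv hglsc
    hg_ne_bot hg_proper T hT F hF t ht0 htlow htrec x y hy0 hx hy s hs μ hμ
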